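/- For every real z ≠ 0 and every integer ℓ ≥ 0: Σ_{k=0}^{ℓ} (−1)^k (2k+1)[j_k(z)]² = (−1)^ℓ·z·j_ℓ(z)·j_{ℓ+1}(z) + j_0(2z). -/

import Mathlib

open Finset

/-- Auxiliary: `sphjAux z n` is the spherical Bessel function `j_{n-1}(z)`. -/
noncomputable def sphjAux (z : ℝ) : ℕ → ℝ
  | 0 => Real.cos z / z
  | 1 => Real.sin z / z
  | (n + 2) => ((2 * (n : ℝ) + 1) / z) * sphjAux z (n + 1) - sphjAux z n

/-- The spherical Bessel function `j_k(z)` for integer `k ≥ -1`. -/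
noncomputable def sphj (k : ℤ) (z : ℝ) : ℝ := sphjAux z (k + 1).toNat

lemma sphj_nat (k : ℕ) (z : ℝ) : sphj (k : ℤ) z = sphjAux z (k + 1) := by
  simp [sphj]

lemma sphj_rec (k : ℕ) (z : ℝ) :
    sphj ((k : ℤ) + 1) z = ((2 * (k : ℝ) + 1) / z) * sphj (k : ℤ) z
      - sphj ((k : ℤ) - 1) z := by
  have h1 : ((k : ℤ) + 1 : ℤ) = ((k + 1 : ℕ) : ℤ) := by push_cast; ring
  have h2 : ((k : ℤ) - 1 + 1).toNat = k := by omega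
  rw [h1, sphj_nat, sphj_nat, sphj, h2]
  rfl

/-- Sum rule `∑_{k=0}^{ℓ} (-1)^k (2k+1)[j_k(z)]² = (-1)^ℓ z j_ℓ(z) j_{ℓ+1}(z) + j_0(2z)`. -/
theorem sum_rule_alternating_2kp1 (z : ℝ) (hz : z ≠ 0) (ℓ : ℕ) :
    ∑ k ∈ Finset.range (ℓ + 1), (-1 : ℝ) ^ k * (2 * (k : ℝ) + 1) * (sphj k z) ^ 2 =
      (-1 : ℝ) ^ ℓ * z * sphj ℓ z * sphj (ℓ + 1) z + sphj 0 (2 * z) := by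
  induction ℓ with
  | zero =>
      have hj0 : sphj 0 (2 * z) = Real.sin z * Real.cos z / z := by
        have : sphj 0 (2 * z) = Real.sin (2 * z) / (2 * z) := by
          simp [sphj, sphjAux]
        rw [this, Real.sin_two_mul]
        field_simp
      have h0 : sphj 0 z = Real.sin z / z := by simp [sphj, sphjAux]
      have h1 : sphj 1 z = (1 / z) * (Real.sin z / z) - Real.cos z / z := by
        show sphjAux z 2 = _
        simp [sphjAux]
      norm_num [Finset.sum_range_one]
      rw [hj0, h0, h1]
      field_simp
      ring
  | succ n ih =>
      rw [Finset.sum_range_succ, ih]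
      have hrec := sphj_rec (n + 1) z
      push_cast at hrec ⊢
      have h2 : ((n : ℤ) + 1 - 1) = (n : ℤ) := by ring
      rw [h2] at hrec
      rw [hrec]
      field_simp
      ring
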